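/- Let m ≥ 1, let M, N ⊆ [m] with ∅ ≠ M ⊊ [m] and N ⊊ [m], and let D = aΔ_M^c + cΔ_N^c ⊆ E^m. Then the linear left-E-code C^L_D has length |D| = (2^m−2^{|M|})(2^m−2^{|N|}) and size |C^L_D| = 2^{2m}, and the multiset {wt_Lee(c^L_D(v)) : v ∈ E^m} (with multiplicity over all 2^{2m} elements v ∈ E^m) consists of: 2^m(2^m−2^{|N|}) with multiplicity 2^{2m−2|M|}−2^{m−|M|+1}+1; 2^{m−1}(2^m−2^{|N|}) with multiplicity 2^{m−|M|+1}−2; (2^m−2^{|M|})(2^m−2^{|N|}) with multiplicity 2^{2m}−2^{2m−|M|+1}+2^{2m−2|M|}; (2^m−2^{|M|−1})(2^m−2^{|N|}) with multiplicity 2^{2m−|M|+1}−2^{2m−2|M|+1}−2^{m+1}+2^{m−|M|+1}; (2^{m−1}−2^{|M|−1})(2^m−2^{|N|}) with multiplicity 2^{m+1}−2^{m−|M|+1}; and 0 with multiplicity 1. -/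

import Mathlib

open Finset

/-- The simplicial complex `Δ_M ⊆ 𝔽₂^m` generated by `M ⊆ [m]`:
all vectors whose support is contained in `M`. -/
def deltaC {m : ℕ} (M : Finset (Fin m)) : Finset (Fin m → ZMod 2) :=
  Finset.univ.filter (fun w => ∀ i, w i ≠ 0 → i ∈ M)

/-- Dot product over `𝔽₂`. -/
def dotp {m : ℕ} (x y : Fin m → ZMod 2) : ZMod 2 := ∑ i, x i * y i

/-- The Gray map on a single element `a·s + c·t ↔ (s, t)` of `E = 𝔽₂ × 𝔽₂`:
`Φ(as + ct) = (t, s + t)`. -/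
def grayPair (e : ZMod 2 × ZMod 2) : Fin 2 → ZMod 2 := ![e.2, e.1 + e.2]

/-- The left codeword `c^L_D(v)` for `v = aα + cβ ↔ (α, β)`:
its coordinate at `d = (t₁, t₂) ∈ D` is `a(α·t₁) + c(β·t₁) ↔ (α·t₁, β·t₁)`. -/
def cwL {m : ℕ} (Ds : Finset ((Fin m → ZMod 2) × (Fin m → ZMod 2)))
    (v : (Fin m → ZMod 2) × (Fin m → ZMod 2)) :
    {d // d ∈ Ds} → ZMod 2 × ZMod 2 :=
  fun d => (dotp v.1 d.1.1, dotp v.2 d.1.1)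

/-- The Gray image `Φ(c^L_D(v)) ∈ 𝔽₂^{2|D|}` of the left codeword `c^L_D(v)`;
its Hamming weight (`hammingNorm`) is the Lee weight of `c^L_D(v)`. -/
def gcwL {m : ℕ} (Ds : Finset ((Fin m → ZMod 2) × (Fin m → ZMod 2)))
    (v : (Fin m → ZMod 2) × (Fin m → ZMod 2)) :
    {d // d ∈ Ds} × Fin 2 → ZMod 2 :=
  fun x => grayPair (cwL Ds v x.1) x.2

/-- The right codeword `c^R_D(v)` for `v = aα + cβ ↔ (α, β)`:
its coordinate at `d = (t₁, t₂) ∈ D` is `a(t₁·α) + c(t₂·α) ↔ (t₁·α, t₂·α)`. -/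
def cwR {m : ℕ} (Ds : Finset ((Fin m → ZMod 2) × (Fin m → ZMod 2)))
    (v : (Fin m → ZMod 2) × (Fin m → ZMod 2)) :
    {d // d ∈ Ds} → ZMod 2 × ZMod 2 :=
  fun d => (dotp d.1.1 v.1, dotp d.1.2 v.1)

/-- The Gray image `Φ(c^R_D(v)) ∈ 𝔽₂^{2|D|}` of the right codeword `c^R_D(v)`;
its Hamming weight (`hammingNorm`) is the Lee weight of `c^R_D(v)`. -/
def gcwR {m : ℕ} (Ds : Finset ((Fin m → ZMod 2) × (Fin m → ZMod 2)))
    (v : (Fin m → ZMod 2) × (Fin m → ZMod 2)) :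
    {d // d ∈ Ds} × Fin 2 → ZMod 2 :=
  fun x => grayPair (cwR Ds v x.1) x.2


/-!
Write `v = aα + cβ`. The Gray image of the coordinate of `c^L_D(v)` at `(t₁, t₂)` is
`(β·t₁, (α+β)·t₁)`, so `wt_Lee(c^L_D(v)) = |Δ_N^c| (w(β) + w(α+β))`, where `w(γ)` counts the
`t ∈ Δ_M^c` with `γ·t = 1`. A linear form that is nonzero on `e_i` takes the value `1` on exactly
half of any set closed under translation by `e_i`; applying this to `F₂^m` and to `Δ_M` gives
`w(0) = 0`, `w(γ) = 2^{m-1}` when `γ ≠ 0` vanishes on `M`, and `w(γ) = 2^{m-1} - 2^{|M|-1}`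
otherwise. Since `(α, β) ↦ (β, α+β)` is a bijection of `E^m`, the weight distribution is the
self-convolution of the distribution of `|Δ_N^c| w`. Finally `w(γ) > 0` for `γ ≠ 0` as `M ≠ [m]`,
which makes `v ↦ c^L_D(v)` injective.
-/

namespace Multiset

variable {α β γ δ : Type*}

theorem replicate_product_replicate (a b : ℕ) (x : α) (y : β) :
    replicate a x ×ˢ replicate b y = replicate (a * b) (x, y) :=
  eq_replicate.2 ⟨by simp, fun p hp => by
    obtain ⟨hx, hy⟩ := mem_product.1 hp
    exact Prod.ext (eq_of_mem_replicate hx) (eq_of_mem_replicate hy)⟩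

theorem map_prodMap_product (f : α → γ) (g : β → δ) (s : Multiset α) (t : Multiset β) :
    (s ×ˢ t).map (Prod.map f g) = s.map f ×ˢ t.map g := by
  induction s using Multiset.induction_on with
  | empty => simp
  | cons a s ih => simp [ih, map_map]

theorem map_add_product_self_of_eq_replicate [AddCommMonoid α] {s : Multiset α} {a b : ℕ}
    {y z : α} (hs : s = replicate 1 0 + replicate a y + replicate b z) :
    (s ×ˢ s).map (fun p => p.1 + p.2) =
      replicate (a * a) (y + y) + replicate (2 * a) y + replicate (b * b) (z + z) +
      replicate (2 * a * b) (y + z) + replicate (2 * b) z + replicate 1 0 := by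
  subst hs
  simp only [add_product, product_add, replicate_product_replicate, map_add, map_replicate,
    zero_add, add_zero, one_mul, mul_one, two_mul, add_mul, replicate_add, add_comm z y,
    mul_comm b a]
  abel

end Multiset

section

variable {m : ℕ}

lemma dotp_eq_dotProduct (x y : Fin m → ZMod 2) : dotp x y = x ⬝ᵥ y := rfl

lemma dotp_add_left (x y t : Fin m → ZMod 2) : dotp (x + y) t = dotp x t + dotp y t :=
  add_dotProduct x y t

lemma dotp_add_right (γ x y : Fin m → ZMod 2) : dotp γ (x + y) = dotp γ x + dotp γ y :=
  dotProduct_add γ x y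

lemma mem_deltaC {M : Finset (Fin m)} {w : Fin m → ZMod 2} :
    w ∈ deltaC M ↔ ∀ i, w i ≠ 0 → i ∈ M := by
  simp [deltaC]

lemma mem_deltaC_compl {M : Finset (Fin m)} {w : Fin m → ZMod 2} :
    w ∈ deltaC Mᶜ ↔ ∀ i ∈ M, w i = 0 := by
  simp only [mem_deltaC, mem_compl]
  exact forall_congr' fun i => by tauto

lemma card_deltaC (M : Finset (Fin m)) : #(deltaC M) = 2 ^ #M := by
  have : deltaC M = Fintype.piFinset fun i => if i ∈ M then univ else {0} := by
    ext w
    simp only [mem_deltaC, Fintype.mem_piFinset]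
    refine forall_congr' fun i => ?_
    split_ifs with hi <;> simp [hi]
  rw [this, Fintype.card_piFinset]
  simp [apply_ite, prod_ite_mem]

lemma card_compl_deltaC (M : Finset (Fin m)) : #(deltaC M)ᶜ = 2 ^ m - 2 ^ #M := by
  simp [card_compl, card_deltaC]

def dotpWeight (A : Finset (Fin m → ZMod 2)) (γ : Fin m → ZMod 2) : ℕ :=
  #{t ∈ A | dotp γ t ≠ 0}

lemma two_mul_dotpWeight_of_add_mem {A : Finset (Fin m → ZMod 2)} {γ u : Fin m → ZMod 2}
    (hu : dotp γ u ≠ 0) (hA : ∀ t ∈ A, t + u ∈ A) : 2 * dotpWeight A γ = #A := by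
  have htr : ∀ t, dotp γ (t + u) ≠ 0 ↔ dotp γ t = 0 := by
    intro t
    rw [dotp_add_right, Fin.eq_one_of_ne_zero _ hu]
    generalize dotp γ t = x
    revert x
    decide
  have hinv : ∀ t, t + u + u = t := fun t => by
    rw [add_assoc, show u + u = 0 from funext fun i => CharTwo.add_self_eq_zero (u i), add_zero]
  have hswap : #{t ∈ A | dotp γ t ≠ 0} = #{t ∈ A | ¬ dotp γ t ≠ 0} := by
    refine card_nbij' (· + u) (· + u) (fun t ht => ?_) (fun t ht => ?_)
      (fun t _ => hinv t) (fun t _ => hinv t)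
    · simp only [mem_coe, mem_filter] at ht ⊢
      exact ⟨hA t ht.1, by rw [htr]; exact ht.2⟩
    · simp only [mem_coe, mem_filter] at ht ⊢
      exact ⟨hA t ht.1, (htr t).2 (not_not.1 ht.2)⟩
  have := card_filter_add_card_filter_not (s := A) (p := fun t => dotp γ t ≠ 0)
  rw [dotpWeight]
  omega

lemma dotpWeight_zero (A : Finset (Fin m → ZMod 2)) : dotpWeight A 0 = 0 := by
  simp [dotpWeight, dotp_eq_dotProduct]

lemma two_mul_dotpWeight_univ (γ : Fin m → ZMod 2) :
    2 * dotpWeight univ γ = if γ = 0 then 0 else 2 ^ m := by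
  split_ifs with hγ
  · rw [hγ, dotpWeight_zero]
  obtain ⟨i, hi⟩ := Function.ne_iff.1 hγ
  rw [two_mul_dotpWeight_of_add_mem (u := Pi.single i 1) (by simpa [dotp_eq_dotProduct] using hi)
    (fun _ _ => mem_univ _)]
  simp

lemma two_mul_dotpWeight_deltaC (M : Finset (Fin m)) (γ : Fin m → ZMod 2) :
    2 * dotpWeight (deltaC M) γ = if ∀ i ∈ M, γ i = 0 then 0 else 2 ^ #M := by
  split_ifs with hγ
  · suffices ∀ t ∈ deltaC M, dotp γ t = 0 by
      rw [dotpWeight, filter_eq_empty_iff.2 fun t ht => not_not.2 (this t ht), card_empty]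
    intro t ht
    refine sum_eq_zero fun i _ => ?_
    by_cases hti : t i = 0
    · simp [hti]
    · simp [hγ i (mem_deltaC.1 ht i hti)]
  push Not at hγ
  obtain ⟨i, hiM, hi⟩ := hγ
  rw [two_mul_dotpWeight_of_add_mem (u := Pi.single i 1) (by simpa [dotp_eq_dotProduct] using hi),
    card_deltaC]
  intro t ht
  rw [mem_deltaC] at ht ⊢
  intro j hj
  by_cases hji : j = i
  · exact hji ▸ hiM
  · exact ht j (by simpa [Pi.single_eq_of_ne hji] using hj)

lemma dotpWeight_compl (A : Finset (Fin m → ZMod 2)) (γ : Fin m → ZMod 2) :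
    dotpWeight Aᶜ γ = dotpWeight univ γ - dotpWeight A γ := by
  rw [dotpWeight, dotpWeight, dotpWeight, ← union_compl A, filter_union,
    card_union_of_disjoint (disjoint_filter_filter disjoint_compl_right)]
  omega

lemma two_mul_dotpWeight_compl_deltaC (M : Finset (Fin m)) (γ : Fin m → ZMod 2) :
    2 * dotpWeight (deltaC M)ᶜ γ =
      (if γ = 0 then 0 else 2 ^ m) - if ∀ i ∈ M, γ i = 0 then 0 else 2 ^ #M := by
  rw [dotpWeight_compl, Nat.mul_sub, two_mul_dotpWeight_univ, two_mul_dotpWeight_deltaC]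

lemma exists_dotp_ne_zero_of_card_lt {M : Finset (Fin m)} (hM : #M < m) {γ : Fin m → ZMod 2}
    (hγ : γ ≠ 0) : ∃ t ∈ (deltaC M)ᶜ, dotp γ t ≠ 0 := by
  have h := two_mul_dotpWeight_compl_deltaC M γ
  rw [if_neg hγ] at h
  have hlt : (if ∀ i ∈ M, γ i = 0 then 0 else 2 ^ #M) < 2 ^ m := by
    split_ifs
    exacts [by positivity, Nat.pow_lt_pow_right (by norm_num) hM]
  obtain ⟨t, ht⟩ := card_pos.1 (show 0 < dotpWeight (deltaC M)ᶜ γ by omega)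
  exact ⟨t, mem_filter.1 ht⟩

lemma map_dotpWeight_compl_deltaC (M : Finset (Fin m)) :
    univ.val.map (dotpWeight (deltaC M)ᶜ) =
      Multiset.replicate 1 0 + Multiset.replicate (2 ^ (m - #M) - 1) (2 ^ (m - 1)) +
      Multiset.replicate (2 ^ m - 2 ^ (m - #M)) (2 ^ (m - 1) - 2 ^ (#M - 1)) := by
  set Z := deltaC Mᶜ
  have hZ : #Z = 2 ^ (m - #M) := by rw [card_deltaC, card_compl, Fintype.card_fin]
  have h0 : (0 : Fin m → ZMod 2) ∈ Z := mem_deltaC_compl.2 fun _ _ => rfl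
  have hsplit : 0 ::ₘ (Z.erase 0).val + Zᶜ.val = univ.val := by
    rw [erase_val, Multiset.cons_erase h0]
    exact congrArg Finset.val ((disjUnion_eq_union _ _ disjoint_compl_right).trans (union_compl Z))
  have hm : ∀ γ : Fin m → ZMod 2, γ ≠ 0 → m ≠ 0 := fun γ hγ hm0 =>
    hγ (funext fun i => (Fin.cast hm0 i).elim0)
  have hE : ∀ γ ∈ (Z.erase 0).val, dotpWeight (deltaC M)ᶜ γ = 2 ^ (m - 1) := by
    intro γ hγ
    obtain ⟨hγ0, hγZ⟩ := mem_erase.1 hγ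
    have h := two_mul_dotpWeight_compl_deltaC M γ
    rw [if_neg hγ0, if_pos (mem_deltaC_compl.1 hγZ), ← mul_pow_sub_one (hm γ hγ0)] at h
    omega
  have hC : ∀ γ ∈ Zᶜ.val, dotpWeight (deltaC M)ᶜ γ = 2 ^ (m - 1) - 2 ^ (#M - 1) := by
    intro γ hγ
    have hγZ : ¬ ∀ i ∈ M, γ i = 0 := fun h => (mem_compl.1 hγ) (mem_deltaC_compl.2 h)
    have hγ0 : γ ≠ 0 := fun h => hγZ fun i _ => by rw [h]; rfl
    obtain ⟨i, hiM, -⟩ := not_forall₂.1 hγZ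
    have h := two_mul_dotpWeight_compl_deltaC M γ
    rw [if_neg hγ0, if_neg hγZ, ← mul_pow_sub_one (hm γ hγ0),
      ← mul_pow_sub_one (card_ne_zero_of_mem hiM)] at h
    omega
  rw [← hsplit, Multiset.map_add, Multiset.map_cons, dotpWeight_zero, Multiset.map_congr rfl hE,
    Multiset.map_congr rfl hC, Multiset.map_const', Multiset.map_const', card_val, card_val,
    card_erase_of_mem h0, card_compl, hZ, Fintype.card_pi]
  simp [Multiset.cons_add]

lemma hammingNorm_grayPair (e : ZMod 2 × ZMod 2) :
    hammingNorm (grayPair e) = (if e.2 ≠ 0 then 1 else 0) + if e.1 + e.2 ≠ 0 then 1 else 0 := by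
  rw [hammingNorm, card_filter, Fin.sum_univ_two]
  rfl

lemma hammingNorm_gcwL_product (A B : Finset (Fin m → ZMod 2))
    (v : (Fin m → ZMod 2) × (Fin m → ZMod 2)) :
    hammingNorm (gcwL (A ×ˢ B) v) = dotpWeight A v.2 * #B + dotpWeight A (v.1 + v.2) * #B := by
  have hsplit : hammingNorm (gcwL (A ×ˢ B) v) =
      ∑ d ∈ A ×ˢ B, hammingNorm (grayPair (dotp v.1 d.1, dotp v.2 d.1)) := by
    rw [← sum_coe_sort]
    simp only [hammingNorm, card_filter, Fintype.sum_prod_type]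
    rfl
  rw [hsplit, sum_product, dotpWeight, dotpWeight, card_filter, card_filter, sum_mul, sum_mul,
    ← sum_add_distrib]
  refine sum_congr rfl fun t _ => ?_
  simp only [sum_const, smul_eq_mul, hammingNorm_grayPair]
  rw [dotp_add_left]
  ring

lemma map_hammingNorm_gcwL_product (A B : Finset (Fin m → ZMod 2)) :
    univ.val.map (fun v => hammingNorm (gcwL (A ×ˢ B) v)) =
      ((univ.val.map fun γ => dotpWeight A γ * #B) ×ˢ
        (univ.val.map fun γ => dotpWeight A γ * #B)).map fun p => p.1 + p.2 := by
  let e : ((Fin m → ZMod 2) × (Fin m → ZMod 2)) ≃ ((Fin m → ZMod 2) × (Fin m → ZMod 2)) :=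
    (Equiv.prodComm _ _).trans (Equiv.prodShear (Equiv.refl _) Equiv.addLeft)
  conv_rhs => rw [← Multiset.map_prodMap_product, Multiset.map_map, ← product_val,
    univ_product_univ, ← Multiset.map_univ_val_equiv e, Multiset.map_map]
  refine Multiset.map_congr rfl fun v _ => ?_
  simp [e, hammingNorm_gcwL_product, add_comm v.1]

lemma cwL_product_injective {A B : Finset (Fin m → ZMod 2)}
    (hA : ∀ γ ≠ 0, ∃ t ∈ A, dotp γ t ≠ 0) (hB : B.Nonempty) : Function.Injective (cwL (A ×ˢ B)) := by
  obtain ⟨s, hs⟩ := hB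
  have hsep : ∀ α β : Fin m → ZMod 2, (∀ t ∈ A, dotp α t = dotp β t) → α = β := by
    intro α β h
    by_contra hne
    obtain ⟨t, ht, hne'⟩ := hA (α - β) (sub_ne_zero.2 hne)
    exact hne' (by rw [dotp_eq_dotProduct, sub_dotProduct]; exact sub_eq_zero.2 (h t ht))
  intro u v huv
  have hcoord t (ht : t ∈ A) := congrFun huv ⟨(t, s), mem_product.2 ⟨ht, hs⟩⟩
  exact Prod.ext (hsep _ _ fun t ht => congrArg Prod.fst (hcoord t ht))
    (hsep _ _ fun t ht => congrArg Prod.snd (hcoord t ht))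


lemma convolution_counts_eq {q X P K B : ℕ} (hq : 2 ≤ q) (hqX : q ≤ X) (hX : X = 2 * P)
    (hK : K < P) :
    Multiset.replicate ((q - 1) * (q - 1)) (P * B + P * B) +
      Multiset.replicate (2 * (q - 1)) (P * B) +
      Multiset.replicate ((X - q) * (X - q)) ((P - K) * B + (P - K) * B) +
      Multiset.replicate (2 * (q - 1) * (X - q)) (P * B + (P - K) * B) +
      Multiset.replicate (2 * (X - q)) ((P - K) * B) + Multiset.replicate 1 0 =
    Multiset.replicate (q * q - 2 * q + 1) (X * B) + Multiset.replicate (2 * q - 2) (P * B) +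
      Multiset.replicate (X * X + q * q - 2 * X * q) ((X - 2 * K) * B) +
      Multiset.replicate (2 * X * q + 2 * q - 2 * q * q - 2 * X) ((X - K) * B) +
      Multiset.replicate (2 * X - 2 * q) ((P - K) * B) + Multiset.replicate 1 0 := by
  have c1 : (q - 1) * (q - 1) = q * q - 2 * q + 1 := by
    have : 2 * q ≤ q * q := Nat.mul_le_mul_right q hq
    zify [this, hq.trans' one_le_two]
    ring
  have c3 : (X - q) * (X - q) = X * X + q * q - 2 * X * q := by
    have : 2 * X * q ≤ X * X + q * q := by nlinarith
    zify [this, hqX]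
    ring
  have c4 : 2 * (q - 1) * (X - q) = 2 * X * q + 2 * q - 2 * q * q - 2 * X := by
    have h1 : 2 * X + 2 * q * q ≤ 2 * X * q + 2 * q := by nlinarith
    have h2 : 2 * q * q ≤ 2 * X * q + 2 * q := by omega
    have h3 : 2 * X ≤ 2 * X * q + 2 * q - 2 * q * q := by omega
    zify [h2, h3, hqX, hq.trans' one_le_two]
    ring
  have v1 : P * B + P * B = X * B := by rw [← add_mul]; congr 1; omega
  have v3 : (P - K) * B + (P - K) * B = (X - 2 * K) * B := by rw [← add_mul]; congr 1; omega
  have v4 : P * B + (P - K) * B = (X - K) * B := by rw [← add_mul]; congr 1; omega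
  rw [c1, c3, c4, v1, v3, v4, Nat.mul_sub_one, Nat.mul_sub]

lemma convolution_counts_eq_pow_two {k m : ℕ} (hk : 0 < k) (hkm : k < m) (B : ℕ) :
    Multiset.replicate ((2 ^ (m - k) - 1) * (2 ^ (m - k) - 1))
        (2 ^ (m - 1) * B + 2 ^ (m - 1) * B) +
      Multiset.replicate (2 * (2 ^ (m - k) - 1)) (2 ^ (m - 1) * B) +
      Multiset.replicate ((2 ^ m - 2 ^ (m - k)) * (2 ^ m - 2 ^ (m - k)))
        ((2 ^ (m - 1) - 2 ^ (k - 1)) * B + (2 ^ (m - 1) - 2 ^ (k - 1)) * B) +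
      Multiset.replicate (2 * (2 ^ (m - k) - 1) * (2 ^ m - 2 ^ (m - k)))
        (2 ^ (m - 1) * B + (2 ^ (m - 1) - 2 ^ (k - 1)) * B) +
      Multiset.replicate (2 * (2 ^ m - 2 ^ (m - k))) ((2 ^ (m - 1) - 2 ^ (k - 1)) * B) +
      Multiset.replicate 1 0 =
    Multiset.replicate (2 ^ (2 * m - 2 * k) - 2 ^ (m - k + 1) + 1) (2 ^ m * B) +
      Multiset.replicate (2 ^ (m - k + 1) - 2) (2 ^ (m - 1) * B) +
      Multiset.replicate (2 ^ (2 * m) + 2 ^ (2 * m - 2 * k) - 2 ^ (2 * m - k + 1))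
        ((2 ^ m - 2 ^ k) * B) +
      Multiset.replicate (2 ^ (2 * m - k + 1) + 2 ^ (m - k + 1) - 2 ^ (2 * m - 2 * k + 1) -
        2 ^ (m + 1)) ((2 ^ m - 2 ^ (k - 1)) * B) +
      Multiset.replicate (2 ^ (m + 1) - 2 ^ (m - k + 1)) ((2 ^ (m - 1) - 2 ^ (k - 1)) * B) +
      Multiset.replicate 1 0 := by
  have hXP : 2 ^ m = 2 * 2 ^ (m - 1) := (mul_pow_sub_one (by omega) 2).symm
  have hKP : 2 ^ k = 2 * 2 ^ (k - 1) := (mul_pow_sub_one (by omega) 2).symm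
  have hlt : 2 ^ (k - 1) < 2 ^ (m - 1) := Nat.pow_lt_pow_right (by norm_num) (by omega)
  have e1 : 2 ^ (2 * m - 2 * k) = 2 ^ (m - k) * 2 ^ (m - k) := by rw [← pow_add]; congr 1; omega
  have e2 : 2 ^ (m - k + 1) = 2 * 2 ^ (m - k) := pow_succ' 2 (m - k)
  have e3 : 2 ^ (2 * m) = 2 ^ m * 2 ^ m := by rw [← pow_add, two_mul]
  have e4 : 2 ^ (2 * m - k + 1) = 2 * 2 ^ m * 2 ^ (m - k) := by
    rw [pow_succ', mul_assoc, ← pow_add]; congr 2; omega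
  have e5 : 2 ^ (2 * m - 2 * k + 1) = 2 * 2 ^ (m - k) * 2 ^ (m - k) := by
    rw [pow_succ', e1, mul_assoc]
  have e6 : 2 ^ (m + 1) = 2 * 2 ^ m := pow_succ' 2 m
  have hq2 : 2 ≤ 2 ^ (m - k) := Nat.le_self_pow (by omega) 2
  have hqX : 2 ^ (m - k) ≤ 2 ^ m := Nat.pow_le_pow_right (by norm_num) (by omega)
  rw [e1, e2, e3, e4, e5, e6, hKP]
  exact convolution_counts_eq hq2 hqX hXP hlt

end

theorem stmt_3_general {m : ℕ} (M N : Finset (Fin m))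
    (hM : M ≠ ∅) (hMu : M ≠ Finset.univ) (hNu : N ≠ Finset.univ)
    (Ds : Finset ((Fin m → ZMod 2) × (Fin m → ZMod 2)))
    (hDs : Ds = (deltaC M)ᶜ ×ˢ (deltaC N)ᶜ) :
    Ds.card = (2 ^ m - 2 ^ M.card) * (2 ^ m - 2 ^ N.card) ∧
    ((Finset.univ : Finset ((Fin m → ZMod 2) × (Fin m → ZMod 2))).image (cwL Ds)).card = 2 ^ (2 * m) ∧
    (Finset.univ : Finset ((Fin m → ZMod 2) × (Fin m → ZMod 2))).val.map (fun v => hammingNorm (gcwL Ds v)) =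
      Multiset.replicate (2 ^ (2 * m - 2 * M.card) - 2 ^ (m - M.card + 1) + 1)
          (2 ^ m * (2 ^ m - 2 ^ N.card)) +
      Multiset.replicate (2 ^ (m - M.card + 1) - 2)
          (2 ^ (m - 1) * (2 ^ m - 2 ^ N.card)) +
      Multiset.replicate (2 ^ (2 * m) + 2 ^ (2 * m - 2 * M.card) - 2 ^ (2 * m - M.card + 1))
          ((2 ^ m - 2 ^ M.card) * (2 ^ m - 2 ^ N.card)) +
      Multiset.replicate (2 ^ (2 * m - M.card + 1) + 2 ^ (m - M.card + 1) - 2 ^ (2 * m - 2 * M.card + 1) - 2 ^ (m + 1))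
          ((2 ^ m - 2 ^ (M.card - 1)) * (2 ^ m - 2 ^ N.card)) +
      Multiset.replicate (2 ^ (m + 1) - 2 ^ (m - M.card + 1))
          ((2 ^ (m - 1) - 2 ^ (M.card - 1)) * (2 ^ m - 2 ^ N.card)) +
      Multiset.replicate (1)
          (0) := by
  subst hDs
  have hk : 0 < #M := card_pos.2 (nonempty_iff_ne_empty.2 hM)
  have hkm : #M < m := by simpa using card_lt_card (ssubset_univ_iff.2 hMu)
  have hn : #N < m := by simpa using card_lt_card (ssubset_univ_iff.2 hNu)
  refine ⟨by rw [card_product, card_compl_deltaC, card_compl_deltaC], ?_, ?_⟩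
  · have hB : (deltaC N)ᶜ.Nonempty := by
      rw [← card_pos, card_compl_deltaC]
      exact Nat.sub_pos_of_lt (Nat.pow_lt_pow_right (by norm_num) hn)
    rw [card_image_of_injective _
      (cwL_product_injective (fun _ => exists_dotp_ne_zero_of_card_lt hkm) hB)]
    simp [two_mul, pow_add]
  · have hvals := congrArg (Multiset.map (· * #(deltaC N)ᶜ)) (map_dotpWeight_compl_deltaC M)
    simp only [Multiset.map_map, Multiset.map_add, Multiset.map_replicate, Function.comp_def,
      zero_mul] at hvals
    rw [map_hammingNorm_gcwL_product, Multiset.map_add_product_self_of_eq_replicate hvals,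
      convolution_counts_eq_pow_two hk hkm, card_compl_deltaC]

theorem stmt_3 {m : ℕ} (hm : 1 ≤ m) (M N : Finset (Fin m))
    (hM : M ≠ ∅) (hMu : M ≠ Finset.univ) (hNu : N ≠ Finset.univ)
    (Ds : Finset ((Fin m → ZMod 2) × (Fin m → ZMod 2)))
    (hDs : Ds = (deltaC M)ᶜ ×ˢ (deltaC N)ᶜ) :
    Ds.card = (2 ^ m - 2 ^ M.card) * (2 ^ m - 2 ^ N.card) ∧
    ((Finset.univ : Finset ((Fin m → ZMod 2) × (Fin m → ZMod 2))).image (cwL Ds)).card = 2 ^ (2 * m) ∧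
    (Finset.univ : Finset ((Fin m → ZMod 2) × (Fin m → ZMod 2))).val.map (fun v => hammingNorm (gcwL Ds v)) =
      Multiset.replicate (2 ^ (2 * m - 2 * M.card) - 2 ^ (m - M.card + 1) + 1)
          (2 ^ m * (2 ^ m - 2 ^ N.card)) +
      Multiset.replicate (2 ^ (m - M.card + 1) - 2)
          (2 ^ (m - 1) * (2 ^ m - 2 ^ N.card)) +
      Multiset.replicate (2 ^ (2 * m) + 2 ^ (2 * m - 2 * M.card) - 2 ^ (2 * m - M.card + 1))
          ((2 ^ m - 2 ^ M.card) * (2 ^ m - 2 ^ N.card)) +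
      Multiset.replicate (2 ^ (2 * m - M.card + 1) + 2 ^ (m - M.card + 1) - 2 ^ (2 * m - 2 * M.card + 1) - 2 ^ (m + 1))
          ((2 ^ m - 2 ^ (M.card - 1)) * (2 ^ m - 2 ^ N.card)) +
      Multiset.replicate (2 ^ (m + 1) - 2 ^ (m - M.card + 1))
          ((2 ^ (m - 1) - 2 ^ (M.card - 1)) * (2 ^ m - 2 ^ N.card)) +
      Multiset.replicate (1)
          (0) :=
  stmt_3_general M N hM hMu hNu Ds hDs
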